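/- arXiv:1111.1912 — 5 statements merged into one kernel-verified Lean document; each statement's English description precedes it below -/
import Mathlib

section
/- A function h : [0,T] → ℝ which is càdlàg (right-continuous with left limits) and injective is of bounded variation on [0,T] if and only if its jumps are absolutely summable, i.e., ∑_{0 < s ≤ T} |h(s) - h(s-)| < ∞. -/
/-!
A jump of `h` at `s` is the limit of increments `h s - h u` with `u ↑ s`, so finitely many jumps
are bounded by the variation over disjoint intervals ending at the jump times; hence bounded
variation makes the jumps summable.

Conversely, the increment `|h (u (i+1)) - h (u i)|` of a partition is the length of the open
interval between the two values, so the variation sum is the integral over levels `y` of the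
number of these intervals containing `y`. A level crossed on `(u i, u (i+1)]` is either attained
there or skipped by a jump at some `s` there, i.e. `y` lies between `h s` and `h (s-)`. Since `h`
is injective, a level is attained on at most one of the intervals; integrating bounds the
variation by the length of a bounded interval containing the range of `h` plus the sum of the
jumps.
-/

open Set Filter Function Topology Bornology MeasureTheory
open scoped ENNReal

/-- `h` is càdlàg on `[0,T]`: right-continuous on `[0,T)` and possessing
left limits on `(0,T]`. -/
def CadlagOn (h : ℝ → ℝ) (T : ℝ) : Prop :=
  (∀ t ∈ Set.Ico (0:ℝ) T, ContinuousWithinAt h (Set.Ici t) t) ∧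
  (∀ t ∈ Set.Ioc (0:ℝ) T, ∃ L : ℝ, Filter.Tendsto h (nhdsWithin t (Set.Iio t)) (nhds L))

section JumpsBoundedByVariation

variable {E : Type*} [EMetricSpace E] {f : ℝ → E}

-- Without a left limit at `s`, `leftLim f s = f s` and the jump vanishes.
theorem edist_leftLim_le_eVariationOn {a s : ℝ} (has : a < s) :
    edist (f s) (leftLim f s) ≤ eVariationOn f (Icc a s) := by
  by_cases hlim : ∃ y, Tendsto f (𝓝[<] s) (𝓝 y)
  · obtain ⟨y, hy⟩ := hlim
    rw [leftLim_eq_of_tendsto hy]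
    refine le_of_tendsto (tendsto_const_nhds.edist hy) ?_
    filter_upwards [Ioo_mem_nhdsLT has] with u hu
    exact eVariationOn.edist_le f (right_mem_Icc.2 has.le) ⟨hu.1.le, hu.2.le⟩
  · simp [leftLim_eq_of_not_tendsto f hlim]

theorem sum_edist_leftLim_le_eVariationOn (F : Finset ℝ) {a b : ℝ} (hF : ↑F ⊆ Ioc a b) :
    ∑ s ∈ F, edist (f s) (leftLim f s) ≤ eVariationOn f (Icc a b) := by
  classical
  induction F using Finset.induction_on_max generalizing b with
  | empty => simp
  | insert m F hlt ih =>
    have hm : m ∈ Ioc a b := hF (Finset.mem_insert_self m F)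
    set c := (insert a F).max' (Finset.insert_nonempty a F)
    have hac : a ≤ c := (insert a F).le_max' a (Finset.mem_insert_self a F)
    have hcm : c < m := by
      have hc : c ∈ insert a F := Finset.max'_mem _ _
      rcases Finset.mem_insert.1 hc with hca | hcF
      · exact hca ▸ hm.1
      · exact hlt c hcF
    have hFc : ↑F ⊆ Ioc a c := fun x hx =>
      ⟨(hF (Finset.mem_insert_of_mem hx)).1,
        (insert a F).le_max' x (Finset.mem_insert_of_mem hx)⟩
    rw [Finset.sum_insert fun hmF => (hlt m hmF).false]
    calc edist (f m) (leftLim f m) + ∑ s ∈ F, edist (f s) (leftLim f s)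
        ≤ eVariationOn f (Icc c m) + eVariationOn f (Icc a c) :=
          add_le_add (edist_leftLim_le_eVariationOn hcm) (ih hFc)
      _ = eVariationOn f (Icc a m) := by
          rw [add_comm]
          simpa only [univ_inter] using
            eVariationOn.Icc_add_Icc f (s := univ) hac hcm.le (mem_univ c)
      _ ≤ eVariationOn f (Icc a b) := eVariationOn.mono f (Icc_subset_Icc_right hm.2)

theorem tsum_edist_leftLim_le_eVariationOn (a b : ℝ) :
    ∑' s : Ioc a b, edist (f s) (leftLim f s) ≤ eVariationOn f (Icc a b) := by
  classical
  rw [ENNReal.tsum_eq_iSup_sum]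
  refine iSup_le fun F => ?_
  simpa [Finset.sum_map] using
    sum_edist_leftLim_le_eVariationOn (f := f) (F.map (Embedding.subtype _)) (by simp)

end JumpsBoundedByVariation

theorem IsCompact.isBounded_image_of_forall_exists_mem_nhdsWithin {X α : Type*}
    [TopologicalSpace X] [Bornology α] {K : Set X} (hK : IsCompact K) {f : X → α}
    (hf : ∀ x ∈ K, ∃ t ∈ 𝓝[K] x, IsBounded (f '' t)) : IsBounded (f '' K) := by
  refine hK.induction_on (p := fun t => IsBounded (f '' t)) (by simp)
    (fun s t hst ht => ht.subset (image_mono hst)) (fun s t hs ht => ?_) hf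
  rw [image_union]
  exact hs.union ht

theorem exists_mem_Ioc_le_forall_lt_of_continuousWithinAt_Ici
    {α β : Type*} [ConditionallyCompleteLinearOrder α] [TopologicalSpace α] [OrderTopology α]
    [LinearOrder β] [TopologicalSpace β] [OrderClosedTopology β]
    {f : α → β} {a b : α} {c : β} (hab : a ≤ b)
    (hf : ∀ t ∈ Ico a b, ContinuousWithinAt f (Ici t) t) (ha : c < f a) (hb : f b ≤ c) :
    ∃ s ∈ Ioc a b, f s ≤ c ∧ ∀ u ∈ Ico a s, c < f u := by
  set A := {u ∈ Icc a b | f u ≤ c}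
  have hbA : b ∈ A := ⟨right_mem_Icc.2 hab, hb⟩
  have hAbdd : BddBelow A := ⟨a, fun u hu => hu.1.1⟩
  have hAs : A ⊆ Ici (sInf A) := fun u hu => csInf_le hAbdd hu
  have has : a ≤ sInf A := le_csInf ⟨b, hbA⟩ fun u hu => hu.1.1
  have hsb : sInf A ≤ b := csInf_le hAbdd hbA
  have hs : f (sInf A) ≤ c := by
    rcases hsb.lt_or_eq with hsb | hsb
    · exact ((hf _ ⟨has, hsb⟩).mono hAs).closure_le (csInf_mem_closure ⟨b, hbA⟩ hAbdd)
        continuousWithinAt_const fun u hu => hu.2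
    · exact hsb ▸ hb
  refine ⟨sInf A, ⟨has.lt_of_ne fun has => ?_, hsb⟩, hs, fun u hu => ?_⟩
  · exact (hs.trans_lt (has ▸ ha)).false
  · by_contra! hfu
    exact (csInf_le hAbdd ⟨⟨hu.1, hu.2.le.trans hsb⟩, hfu⟩).not_gt hu.2

def jumpTimes (h : ℝ → ℝ) (T : ℝ) : Set ℝ := {s ∈ Ioc 0 T | h s ≠ leftLim h s}

theorem countable_jumpTimes {h : ℝ → ℝ} {T : ℝ}
    (hsum : ∑' s : Ioc (0 : ℝ) T, edist (h s) (leftLim h s) ≠ ∞) :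
    (jumpTimes h T).Countable := by
  refine ((Summable.countable_support_ennreal hsum).image Subtype.val).mono ?_
  rintro s ⟨hs, hjump⟩
  exact ⟨⟨s, hs⟩, (edist_pos.2 hjump).ne', rfl⟩

namespace CadlagOn

variable {h : ℝ → ℝ} {T : ℝ}

theorem tendsto_leftLim (hc : CadlagOn h T) {s : ℝ} (hs : s ∈ Ioc 0 T) :
    Tendsto h (𝓝[<] s) (𝓝 (leftLim h s)) := by
  obtain ⟨L, hL⟩ := hc.2 s hs
  rwa [leftLim_eq_of_tendsto hL]

theorem isBounded_image (hc : CadlagOn h T) : IsBounded (h '' Icc 0 T) := by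
  refine isCompact_Icc.isBounded_image_of_forall_exists_mem_nhdsWithin fun x hx => ?_
  have hleft : ∃ L, Tendsto h (𝓝[Icc 0 T ∩ Iio x] x) (𝓝 L) := by
    rcases hx.1.eq_or_lt with rfl | hx0
    · refine ⟨0, ?_⟩
      rw [show Icc 0 T ∩ Iio (0 : ℝ) = ∅ by ext; simp +contextual, nhdsWithin_empty]
      exact tendsto_bot
    · obtain ⟨L, hL⟩ := hc.2 x ⟨hx0, hx.2⟩
      exact ⟨L, hL.mono_left (nhdsWithin_mono x inter_subset_right)⟩
  have hright : ContinuousWithinAt h (Icc 0 T ∩ Ici x) x := by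
    rcases hx.2.lt_or_eq with hxT | rfl
    · exact (hc.1 x ⟨hx.1, hxT⟩).mono inter_subset_right
    · exact (continuousWithinAt_singleton (x := x)).mono fun u hu => le_antisymm hu.1.2 hu.2
  obtain ⟨L, hL⟩ := hleft
  obtain ⟨t₁, ht₁, hbd₁⟩ := Metric.exists_isBounded_image_of_tendsto hL
  obtain ⟨t₂, ht₂, hbd₂⟩ := Metric.exists_isBounded_image_of_tendsto hright
  refine ⟨t₁ ∪ t₂, ?_, by rw [image_union]; exact hbd₁.union hbd₂⟩
  rw [← inter_univ (Icc 0 T), ← Iio_union_Ici (a := x), inter_union_distrib_left,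
    nhdsWithin_union]
  exact ⟨mem_of_superset ht₁ subset_union_left, mem_of_superset ht₂ subset_union_right⟩

theorem exists_mem_uIcc_leftLim (hc : CadlagOn h T) {a b y : ℝ} (ha : 0 ≤ a) (hab : a ≤ b)
    (hb : b ≤ T) (hy : y ∈ uIoo (h a) (h b)) :
    ∃ s ∈ Ioc a b, y ∈ uIcc (h s) (leftLim h s) := by
  -- `g u ≤ 0` says that `h u` is not on the same side of `y` as `h a`
  set g : ℝ → ℝ := fun u => (h a - y) * (h u - y)
  have hgb : g b < 0 := by
    rcases le_total (h a) (h b) with hle | hle <;>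
      simp only [uIoo_of_le, uIoo_of_ge, hle, mem_Ioo] at hy <;> nlinarith [hy.1, hy.2]
  have hd : h a - y ≠ 0 := left_ne_zero_of_mul hgb.ne
  have hg : ∀ t ∈ Ico a b, ContinuousWithinAt g (Ici t) t := fun t ht =>
    continuousWithinAt_const.mul
      ((hc.1 t ⟨ha.trans ht.1, ht.2.trans_le hb⟩).sub continuousWithinAt_const)
  obtain ⟨s, hs, hgs, hpos⟩ :=
    exists_mem_Ioc_le_forall_lt_of_continuousWithinAt_Ici hab hg (mul_self_pos.2 hd) hgb.le
  have hgL : 0 ≤ (h a - y) * (leftLim h s - y) := by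
    refine ge_of_tendsto (((hc.tendsto_leftLim ⟨ha.trans_lt hs.1, hs.2.trans hb⟩).sub_const y
      ).const_mul (h a - y)) ?_
    filter_upwards [Ioo_mem_nhdsLT hs.1] with u hu
    exact (hpos u ⟨hu.1.le, hu.2⟩).le
  refine ⟨s, hs, mem_uIcc.2 ?_⟩
  rcases hd.lt_or_gt with hd | hd
  · exact Or.inr ⟨by nlinarith, by nlinarith⟩
  · exact Or.inl ⟨by nlinarith, by nlinarith⟩

theorem sum_indicator_uIoo_le (hc : CadlagOn h T) (hinj : InjOn h (Icc 0 T)) {u : ℕ → ℝ}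
    (hu : Monotone u) (hus : ∀ i, u i ∈ Icc 0 T) (n : ℕ) (y : ℝ) :
    ∑ i ∈ Finset.range n, (uIoo (h (u i)) (h (u (i + 1)))).indicator (1 : ℝ → ℝ≥0∞) y ≤
      1 + ∑' s : jumpTimes h T, (uIcc (h s) (leftLim h s)).indicator (1 : ℝ → ℝ≥0∞) y := by
  classical
  set F := (Finset.range n).filter fun i => y ∈ uIoo (h (u i)) (h (u (i + 1)))
  have hsum : ∑ i ∈ Finset.range n, (uIoo (h (u i)) (h (u (i + 1)))).indicator
      (1 : ℝ → ℝ≥0∞) y = F.card := by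
    simp only [indicator_apply, Pi.one_apply]
    rw [← Finset.sum_filter, Finset.sum_const, nsmul_one]
  have hcross : ∀ i ∈ F, ∃ s ∈ Ioc (u i) (u (i + 1)), y ∈ uIcc (h s) (leftLim h s) :=
    fun i hi => hc.exists_mem_uIcc_leftLim (hus i).1 (hu i.le_succ) (hus (i + 1)).2
      (Finset.mem_filter.1 hi).2
  choose! w hw hwy using hcross
  have hwT : ∀ i ∈ F, w i ∈ Icc 0 T := fun i hi =>
    ⟨(hus i).1.trans (hw i hi).1.le, (hw i hi).2.trans (hus (i + 1)).2⟩
  have hwinj : InjOn w F := StrictMonoOn.injOn fun i hi j hj hij =>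
    calc w i ≤ u (i + 1) := (hw i hi).2
      _ ≤ u j := hu hij
      _ < w j := (hw j hj).1
  have hattained : (F.filter fun i => h (w i) = y).card ≤ 1 :=
    Finset.card_le_one.2 fun i hi j hj => by
      rw [Finset.mem_filter] at hi hj
      exact hwinj hi.1 hj.1 (hinj (hwT i hi.1) (hwT j hj.1) (hi.2.trans hj.2.symm))
  have hjump : ∀ i : F.filter fun i => h (w i) ≠ y, w i ∈ jumpTimes h T := by
    rintro ⟨i, hi⟩
    rw [Finset.mem_filter] at hi
    refine ⟨⟨(hus i).1.trans_lt (hw i hi.1).1, (hwT i hi.1).2⟩, fun heq => hi.2 ?_⟩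
    have hy := hwy i hi.1
    rwa [← heq, uIcc_self, mem_singleton_iff, eq_comm] at hy
  have hskipped : ((F.filter fun i => h (w i) ≠ y).card : ℝ≥0∞) ≤
      ∑' s : jumpTimes h T, (uIcc (h s) (leftLim h s)).indicator (1 : ℝ → ℝ≥0∞) y := by
    refine le_of_eq_of_le ?_ (ENNReal.tsum_comp_le_tsum_of_injective
      (f := fun i : F.filter (fun i => h (w i) ≠ y) => (⟨w i, hjump i⟩ : jumpTimes h T))
      (fun i j hij => Subtype.ext (hwinj (Finset.mem_filter.1 i.2).1
        (Finset.mem_filter.1 j.2).1 (congrArg Subtype.val hij))) _)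
    rw [tsum_congr fun i : F.filter (fun i => h (w i) ≠ y) =>
      indicator_of_mem (hwy i.1 (Finset.mem_filter.1 i.2).1) _]
    simp
  rw [hsum, ← Finset.card_filter_add_card_filter_not (fun i => h (w i) = y), Nat.cast_add]
  gcongr
  exact_mod_cast hattained

theorem eVariationOn_le_volume_add_tsum_edist_leftLim (hc : CadlagOn h T)
    (hinj : InjOn h (Icc 0 T))
    (hcount : (jumpTimes h T).Countable) {m M : ℝ} (hM : h '' Icc 0 T ⊆ Icc m M) :
    eVariationOn h (Icc 0 T) ≤
      volume (Icc m M) + ∑' s : jumpTimes h T, edist (h s) (leftLim h s) := by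
  have := hcount.to_subtype
  refine iSup_le fun ⟨n, u, hu, hus⟩ => ?_
  have hpt : ∀ y, ∑ i ∈ Finset.range n, (uIoo (h (u i)) (h (u (i + 1)))).indicator 1 y ≤
      (Icc m M).indicator 1 y +
        ∑' s : jumpTimes h T, (uIcc (h s) (leftLim h s)).indicator (1 : ℝ → ℝ≥0∞) y := by
    intro y
    by_cases hy : y ∈ Icc m M
    · rw [indicator_of_mem hy]
      exact hc.sum_indicator_uIoo_le hinj hu hus n y
    · refine le_of_eq_of_le (Finset.sum_eq_zero fun i _ => indicator_of_notMem ?_ _) zero_le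
      exact fun hyS => hy (uIcc_subset_Icc (hM (mem_image_of_mem h (hus i)))
        (hM (mem_image_of_mem h (hus (i + 1)))) (Ioo_subset_Icc_self hyS))
  calc ∑ i ∈ Finset.range n, edist (h (u (i + 1))) (h (u i))
      = ∫⁻ y, ∑ i ∈ Finset.range n, (uIoo (h (u i)) (h (u (i + 1)))).indicator 1 y := by
        have hS : ∀ i, MeasurableSet (uIoo (h (u i)) (h (u (i + 1)))) :=
          fun i => measurableSet_Ioo
        rw [lintegral_finsetSum _ fun i _ => measurable_one.indicator (hS i)]
        simp [lintegral_indicator_one (hS _), edist_dist, Real.dist_eq]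
    _ ≤ ∫⁻ y, ((Icc m M).indicator 1 y +
        ∑' s : jumpTimes h T, (uIcc (h s) (leftLim h s)).indicator (1 : ℝ → ℝ≥0∞) y) :=
        lintegral_mono hpt
    _ = volume (Icc m M) + ∑' s : jumpTimes h T, edist (h s) (leftLim h s) := by
        rw [lintegral_add_left (measurable_one.indicator measurableSet_Icc),
          lintegral_tsum fun s => (measurable_one.indicator measurableSet_uIcc).aemeasurable]
        simp [lintegral_indicator_one measurableSet_Icc,
          lintegral_indicator_one measurableSet_uIcc, edist_dist, Real.dist_eq, abs_sub_comm]

end CadlagOn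

theorem stmt3_general (T : ℝ) (h : ℝ → ℝ) (hc : CadlagOn h T)
    (hinj : Set.InjOn h (Set.Icc 0 T)) :
    BoundedVariationOn h (Set.Icc 0 T) ↔
      Summable (fun s : Set.Ioc (0:ℝ) T => |h s - Function.leftLim h s|) := by
  simp_rw [← Real.norm_eq_abs, ← tsum_enorm_ne_top_iff_summable_norm, ← edist_eq_enorm_sub]
  refine ⟨fun hBV => ne_top_of_le_ne_top hBV (tsum_edist_leftLim_le_eVariationOn 0 T),
    fun hsum => ne_top_of_le_ne_top ?_ (hc.eVariationOn_le_volume_add_tsum_edist_leftLim hinj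
      (countable_jumpTimes hsum) hc.isBounded_image.subset_Icc_sInf_sSup)⟩
  exact ENNReal.add_ne_top.2 ⟨measure_Icc_lt_top.ne,
    ne_top_of_le_ne_top hsum (ENNReal.tsum_mono_subtype (fun s => edist (h s) (leftLim h s))
      fun _ hs => hs.1)⟩

theorem stmt3 (T : ℝ) (hT : 0 < T) (h : ℝ → ℝ) (hc : CadlagOn h T)
    (hinj : Set.InjOn h (Set.Icc 0 T)) :
    BoundedVariationOn h (Set.Icc 0 T) ↔
      Summable (fun s : Set.Ioc (0:ℝ) T => |h s - Function.leftLim h s|) :=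
  stmt3_general T h hc hinj
end

section
/- Let a < c, let f : [a,c) → ℝ be continuous with f(a) = lim_{t→c⁻} f(t), and let b ∈ [a,c) with f(a) ≠ f(b). Let g : [a,c) → ℝ be a càdlàg pure-jump function, i.e., g(x) = ∑_{a ≤ s ≤ x} (g(s) - g(s-)) for all x. If ∑_{a ≤ s < c} |Δg(s)| < (1/2)·|f(a) - f(b)|, then f + g is not injective on [a,c). -/
/-!
Write `h = f + g`. Since `f` returns to `f a` at `c` and the jumps of `g` add up to
`S < |f a - f b| / 2`, there is `t₀ ∈ (b, c)` such that `h a` and `h t₀` lie on the same side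
of `h b`, at distance more than `S`. The jump intervals `[h(s-), h(s)]` have total length at
most `S`, so some level strictly between `h b` and `h a`, `h t₀` is crossed by no jump. A
right-continuous function with left limits that never jumps across a level satisfies the
intermediate value theorem for it, so `h` takes this level both on `[a, b]` and on `[b, t₀]`,
at two distinct points.
-/

/-- The jump of `g` at `s`, with the convention `g(a-) := 0`, so the jump
at `a` is `g a` itself. -/
noncomputable def jumpAt (g : ℝ → ℝ) (a s : ℝ) : ℝ :=
  if s = a then g a else g s - Function.leftLim g s

open Filter Set Function MeasureTheory Topology

section JumpIntermediateValue

variable {φ : ℝ → ℝ} {p q y : ℝ}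

theorem leftLim_neg_of_tendsto {t : ℝ} (h : Tendsto φ (𝓝[<] t) (𝓝 (leftLim φ t))) :
    leftLim (-φ) t = -leftLim φ t :=
  leftLim_eq_of_tendsto h.neg

/- The first point of `[p, q]` where `φ ≤ y` is a zero of `φ - y`: right continuity gives
`φ ≤ y` there, and a strict inequality would make `φ` jump upwards across `y`. -/
theorem intermediate_value_Icc'_of_jumps_avoid (hpq : p ≤ q)
    (hrc : ∀ t ∈ Icc p q, ContinuousWithinAt φ (Ici t) t)
    (hll : ∀ t ∈ Ioc p q, Tendsto φ (𝓝[<] t) (𝓝 (leftLim φ t)))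
    (hjump : ∀ s ∈ Ioc p q, φ s ≠ leftLim φ s → y ∉ uIcc (leftLim φ s) (φ s))
    (hy : y ∈ Icc (φ q) (φ p)) : y ∈ φ '' Icc p q := by
  set A := {t ∈ Icc p q | φ t ≤ y}
  have hA : A.Nonempty := ⟨q, right_mem_Icc.2 hpq, hy.1⟩
  have hglb : IsGLB A (sInf A) := isGLB_csInf hA ⟨p, fun t ht => ht.1.1⟩
  set u := sInf A
  have hu : u ∈ Icc p q := ⟨hglb.2 fun t ht => ht.1.1, hglb.1 ⟨right_mem_Icc.2 hpq, hy.1⟩⟩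
  have hle : φ u ≤ y :=
    le_of_tendsto_of_frequently (hrc u hu) ((hglb.frequently_mem hA).mono fun t ht => ht.2)
  refine ⟨u, hu, hle.antisymm (not_lt.1 fun hlt => ?_)⟩
  have hpu : p < u := hu.1.lt_of_ne fun hpu => by rw [← hpu] at hlt; linarith [hy.2]
  have hyL : y ≤ leftLim φ u := by
    refine ge_of_tendsto (hll u ⟨hpu, hu.2⟩) ?_
    filter_upwards [Ioo_mem_nhdsLT hpu] with t ht
    exact not_lt.1 fun hty => ht.2.not_ge (hglb.1 ⟨⟨ht.1.le, ht.2.le.trans hu.2⟩, hty.le⟩)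
  exact hjump u ⟨hpu, hu.2⟩ (hlt.trans_le hyL).ne (mem_uIcc.2 (Or.inr ⟨hlt.le, hyL⟩))

theorem intermediate_value_Icc_of_jumps_avoid (hpq : p ≤ q)
    (hrc : ∀ t ∈ Icc p q, ContinuousWithinAt φ (Ici t) t)
    (hll : ∀ t ∈ Ioc p q, Tendsto φ (𝓝[<] t) (𝓝 (leftLim φ t)))
    (hjump : ∀ s ∈ Ioc p q, φ s ≠ leftLim φ s → y ∉ uIcc (leftLim φ s) (φ s))
    (hy : y ∈ Icc (φ p) (φ q)) : y ∈ φ '' Icc p q := by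
  have hneg := fun t ht => leftLim_neg_of_tendsto (hll t ht)
  obtain ⟨u, hu, hφu⟩ := intermediate_value_Icc'_of_jumps_avoid (φ := -φ) (y := -y) hpq
    (fun t ht => (hrc t ht).neg)
    (fun t ht => by rw [hneg t ht]; exact (hll t ht).neg)
    (fun s hs hne => by
      rw [hneg s hs, Pi.neg_apply, ← image_neg_uIcc, image_neg_eq_neg, Set.neg_mem_neg]
      exact hjump s hs fun h => hne (by rw [Pi.neg_apply, h, hneg s hs]))
    ⟨neg_le_neg hy.2, neg_le_neg hy.1⟩
  exact ⟨u, hu, neg_injective hφu⟩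

end JumpIntermediateValue

/- The sum is finite, so only countably many intervals are nondegenerate; by countable
subadditivity their union is too small to cover `(c, d)`. -/
theorem exists_mem_Ioo_forall_notMem_uIcc {ι : Type*} (u v : ι → ℝ) {c d : ℝ}
    (hlen : ∑' i, ENNReal.ofReal |v i - u i| < ENNReal.ofReal (d - c)) :
    ∃ y ∈ Ioo c d, ∀ i, u i ≠ v i → y ∉ uIcc (u i) (v i) := by
  set D := {i | u i ≠ v i}
  have hD : D.Countable := by
    refine (Summable.countable_support_ennreal (hlen.trans ENNReal.ofReal_lt_top).ne).mono ?_
    intro i hi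
    rw [mem_support, ne_eq, ENNReal.ofReal_eq_zero, not_le, abs_pos, sub_ne_zero]
    exact hi.symm
  by_contra! hcover
  have hsub : Ioo c d ⊆ ⋃ i ∈ D, uIcc (u i) (v i) := fun y hy => by
    obtain ⟨i, hi, hyi⟩ := hcover y hy
    exact mem_biUnion hi hyi
  refine (lt_irrefl (ENNReal.ofReal (d - c))) (lt_of_le_of_lt ?_ hlen)
  calc ENNReal.ofReal (d - c) = volume (Ioo c d) := Real.volume_Ioo.symm
    _ ≤ volume (⋃ i ∈ D, uIcc (u i) (v i)) := measure_mono hsub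
    _ ≤ ∑' i : D, volume (uIcc (u i) (v i)) := measure_biUnion_le _ hD _
    _ = ∑' i : D, ENNReal.ofReal |v i - u i| := by simp only [Real.volume_interval]
    _ ≤ ∑' i, ENNReal.ofReal |v i - u i| :=
      ENNReal.tsum_comp_le_tsum_of_injective Subtype.val_injective _

section DipAndPeak

variable {h : ℝ → ℝ} {p r q : ℝ}

theorem not_injOn_of_tsum_jump_lt_dip (hpr : p ≤ r) (hrq : r ≤ q)
    (hrc : ∀ t ∈ Icc p q, ContinuousWithinAt h (Ici t) t)
    (hll : ∀ t ∈ Ioc p q, Tendsto h (𝓝[<] t) (𝓝 (leftLim h t)))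
    (hjumps : ∑' s : Ioc p q, ENNReal.ofReal |h s - leftLim h s|
      < ENNReal.ofReal (min (h p) (h q) - h r)) :
    ¬ InjOn h (Icc p q) := by
  intro hinj
  obtain ⟨y, hy, hyjump⟩ := exists_mem_Ioo_forall_notMem_uIcc
    (fun s : Ioc p q => leftLim h s) (fun s => h s) hjumps
  have hjump : ∀ s ∈ Ioc p q, h s ≠ leftLim h s → y ∉ uIcc (leftLim h s) (h s) :=
    fun s hs hne => hyjump ⟨s, hs⟩ hne.symm
  have hpr_sub : Icc p r ⊆ Icc p q := Icc_subset_Icc le_rfl hrq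
  have hrq_sub : Icc r q ⊆ Icc p q := Icc_subset_Icc hpr le_rfl
  obtain ⟨u, hu, hhu⟩ := intermediate_value_Icc'_of_jumps_avoid hpr
    (fun t ht => hrc t (hpr_sub ht)) (fun t ht => hll t (Ioc_subset_Ioc le_rfl hrq ht))
    (fun s hs => hjump s (Ioc_subset_Ioc le_rfl hrq hs))
    ⟨hy.1.le, hy.2.le.trans (min_le_left _ _)⟩
  obtain ⟨v, hv, hhv⟩ := intermediate_value_Icc_of_jumps_avoid hrq
    (fun t ht => hrc t (hrq_sub ht)) (fun t ht => hll t (Ioc_subset_Ioc hpr le_rfl ht))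
    (fun s hs => hjump s (Ioc_subset_Ioc hpr le_rfl hs))
    ⟨hy.1.le, hy.2.le.trans (min_le_right _ _)⟩
  have huv : u = v := hinj (hpr_sub hu) (hrq_sub hv) (hhu.trans hhv.symm)
  have hur : u = r := le_antisymm hu.2 (huv ▸ hv.1)
  exact hy.1.ne (by rw [← hur, hhu])

theorem not_injOn_of_tsum_jump_lt_peak (hpr : p ≤ r) (hrq : r ≤ q)
    (hrc : ∀ t ∈ Icc p q, ContinuousWithinAt h (Ici t) t)
    (hll : ∀ t ∈ Ioc p q, Tendsto h (𝓝[<] t) (𝓝 (leftLim h t)))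
    (hjumps : ∑' s : Ioc p q, ENNReal.ofReal |h s - leftLim h s|
      < ENNReal.ofReal (h r - max (h p) (h q))) :
    ¬ InjOn h (Icc p q) := by
  have hneg := fun t ht => leftLim_neg_of_tendsto (hll t ht)
  refine fun hinj => not_injOn_of_tsum_jump_lt_dip (h := -h) hpr hrq
    (fun t ht => (hrc t ht).neg) (fun t ht => by rw [hneg t ht]; exact (hll t ht).neg) ?_
    ((neg_injective (G := ℝ)).comp_injOn hinj)
  convert hjumps using 2
  · funext s
    rw [hneg s s.2, Pi.neg_apply, neg_sub_neg, abs_sub_comm]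
  · rw [Pi.neg_apply, Pi.neg_apply, Pi.neg_apply, min_neg_neg]
    ring

end DipAndPeak

theorem abs_sub_le_tsum_abs_of_eq_tsum_Icc {g J : ℝ → ℝ} {a c x' x : ℝ}
    (hsum : Summable fun s : Ico a c => |J s|)
    (hpure : ∀ x ∈ Ico a c, g x = ∑' s : Icc a x, J s)
    (hax' : a ≤ x') (hx'x : x' ≤ x) (hxc : x < c) :
    |g x - g x'| ≤ ∑' s : Ico a c, |J s| := by
  have hsummable {T : Set ℝ} (hT : T ⊆ Ico a c) : Summable fun s : T => J s :=
    hsum.of_abs.comp_injective (inclusion_injective hT)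
  have hIcc : Icc a x' ⊆ Ico a c := Icc_subset_Ico_right (hx'x.trans_lt hxc)
  have hIoc : Ioc x' x ⊆ Ico a c := fun s hs => ⟨hax'.trans hs.1.le, hs.2.trans_lt hxc⟩
  have hsplit : g x - g x' = ∑' s : Ioc x' x, J s := by
    rw [hpure x ⟨hax'.trans hx'x, hxc⟩, hpure x' ⟨hax', hx'x.trans_lt hxc⟩,
      ← Icc_union_Ioc_eq_Icc hax' hx'x,
      (hsummable hIcc).tsum_union_disjoint (disjoint_left.2 fun s h₁ h₂ => h₂.1.not_ge h₁.2)
        (hsummable hIoc), add_sub_cancel_left]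
  calc |g x - g x'| = |∑' s : Ioc x' x, J s| := by rw [hsplit]
    _ ≤ ∑' s : Ioc x' x, |J s| := by
      simpa only [Real.norm_eq_abs] using norm_tsum_le_tsum_norm (hsummable hIoc).norm
    _ ≤ ∑' s : Ico a c, |J s| :=
      tsum_comp_le_tsum_of_inj hsum (fun _ => abs_nonneg _) (inclusion_injective hIoc)

section ContinuousAddPureJump

variable {f g : ℝ → ℝ} {a c t : ℝ}

theorem continuousWithinAt_Ici_add_of_continuousOn_Ico (hf : ContinuousOn f (Ico a c))
    (hgrc : ∀ t ∈ Ico a c, ContinuousWithinAt g (Ici t) t) (ht : t ∈ Ico a c) :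
    ContinuousWithinAt (f + g) (Ici t) t :=
  ((hf t ht).mono_of_mem_nhdsWithin
    (mem_of_superset (Ico_mem_nhdsGE ht.2) (Ico_subset_Ico_left ht.1))).add (hgrc t ht)

theorem tendsto_nhdsLT_add_leftLim (hf : ContinuousOn f (Ico a c))
    (hgll : ∀ t ∈ Ioc a c, ∃ L : ℝ, Tendsto g (𝓝[<] t) (𝓝 L)) (ht : t ∈ Ioo a c) :
    Tendsto (f + g) (𝓝[<] t) (𝓝 (f t + leftLim g t)) := by
  obtain ⟨L, hL⟩ := hgll t ⟨ht.1, ht.2.le⟩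
  rw [leftLim_eq_of_tendsto hL]
  exact ((hf.continuousAt (Ico_mem_nhds ht.1 ht.2)).tendsto.mono_left nhdsWithin_le_nhds).add hL

theorem add_sub_leftLim_add (hf : ContinuousOn f (Ico a c))
    (hgll : ∀ t ∈ Ioc a c, ∃ L : ℝ, Tendsto g (𝓝[<] t) (𝓝 L)) (ht : t ∈ Ioo a c) :
    (f + g) t - leftLim (f + g) t = jumpAt g a t := by
  rw [leftLim_eq_of_tendsto (tendsto_nhdsLT_add_leftLim hf hgll ht), jumpAt, if_neg ht.1.ne',
    Pi.add_apply]
  ring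

theorem tsum_ofReal_abs_jump_add_le (hf : ContinuousOn f (Ico a c))
    (hgll : ∀ t ∈ Ioc a c, ∃ L : ℝ, Tendsto g (𝓝[<] t) (𝓝 L))
    (hsum : Summable fun s : Ico a c => |jumpAt g a s|) {q : ℝ} (hqc : q < c) :
    ∑' s : Ioc a q, ENNReal.ofReal |(f + g) s - leftLim (f + g) s|
      ≤ ENNReal.ofReal (∑' s : Ico a c, |jumpAt g a s|) := by
  have hsub : Ioc a q ⊆ Ico a c := Ioc_subset_Ioo_right hqc |>.trans Ioo_subset_Ico_self
  calc ∑' s : Ioc a q, ENNReal.ofReal |(f + g) s - leftLim (f + g) s|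
      = ∑' s : Ioc a q, ENNReal.ofReal |jumpAt g a s| := by
        refine tsum_congr fun s => ?_
        rw [add_sub_leftLim_add hf hgll ⟨s.2.1, s.2.2.trans_lt hqc⟩]
    _ ≤ ∑' s : Ico a c, ENNReal.ofReal |jumpAt g a s| :=
      ENNReal.tsum_mono_subtype (fun s => ENNReal.ofReal |jumpAt g a s|) hsub
    _ = ENNReal.ofReal (∑' s : Ico a c, |jumpAt g a s|) :=
      (ENNReal.ofReal_tsum_of_nonneg (fun _ => abs_nonneg _) hsum).symm

end ContinuousAddPureJump

theorem stmt5_general (a b c : ℝ) (hb : b ∈ Set.Ico a c)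
    (f g : ℝ → ℝ)
    (hf : ContinuousOn f (Set.Ico a c))
    (hflim : Filter.Tendsto f (nhdsWithin c (Set.Iio c)) (nhds (f a)))
    (hfab : f a ≠ f b)
    (hgrc : ∀ t ∈ Set.Ico a c, ContinuousWithinAt g (Set.Ici t) t)
    (hgll : ∀ t ∈ Set.Ioc a c, ∃ L : ℝ, Filter.Tendsto g (nhdsWithin t (Set.Iio t)) (nhds L))
    (hsum : Summable (fun s : Set.Ico a c => |jumpAt g a s|))
    (hpure : ∀ x ∈ Set.Ico a c, g x = ∑' s : Set.Icc a x, jumpAt g a s)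
    (hsmall : (∑' s : Set.Ico a c, |jumpAt g a s|) < (1/2) * |f a - f b|) :
    ¬ Set.InjOn (fun t => f t + g t) (Set.Ico a c) := by
  set S := ∑' s : Ico a c, |jumpAt g a s|
  obtain ⟨t₀, hft₀, hbt₀, ht₀c⟩ : ∃ t₀, dist (f t₀) (f a) < |f a - f b| / 2 - S ∧ t₀ ∈ Ioo b c :=
    ((Metric.tendsto_nhds.1 hflim _ (by linarith)).and (Ioo_mem_nhdsLT hb.2)).exists
  have hsub : Icc a t₀ ⊆ Ico a c := Icc_subset_Ico_right ht₀c
  have hrc : ∀ t ∈ Icc a t₀, ContinuousWithinAt (f + g) (Ici t) t :=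
    fun t ht => continuousWithinAt_Ici_add_of_continuousOn_Ico hf hgrc (hsub ht)
  have hll : ∀ t ∈ Ioc a t₀, Tendsto (f + g) (𝓝[<] t) (𝓝 (leftLim (f + g) t)) := fun t ht => by
    have h := tendsto_nhdsLT_add_leftLim hf hgll ⟨ht.1, ht.2.trans_lt ht₀c⟩
    rwa [leftLim_eq_of_tendsto h]
  have hjumps : ∑' s : Ioc a t₀, ENNReal.ofReal |(f + g) s - leftLim (f + g) s|
      ≤ ENNReal.ofReal S := tsum_ofReal_abs_jump_add_le hf hgll hsum ht₀c
  have hS : 0 ≤ S := tsum_nonneg fun _ => abs_nonneg _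
  have hgab : |g b - g a| ≤ S := abs_sub_le_tsum_abs_of_eq_tsum_Icc hsum hpure le_rfl hb.1 hb.2
  have hgbt₀ : |g t₀ - g b| ≤ S :=
    abs_sub_le_tsum_abs_of_eq_tsum_Icc hsum hpure hb.1 hbt₀.le ht₀c
  intro hinj
  rcases hfab.lt_or_gt with hlt | hgt
  · refine not_injOn_of_tsum_jump_lt_peak hb.1 hbt₀.le hrc hll
      (hjumps.trans_lt ((ENNReal.ofReal_lt_ofReal_iff_of_nonneg hS).2 ?_)) (hinj.mono hsub)
    rw [abs_of_neg (sub_neg.2 hlt)] at hsmall hft₀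
    simp only [Pi.add_apply, lt_sub_comm (a := S), max_lt_iff]
    constructor <;> linarith [abs_le.1 hgab, abs_le.1 hgbt₀, abs_lt.1 hft₀]
  · refine not_injOn_of_tsum_jump_lt_dip hb.1 hbt₀.le hrc hll
      (hjumps.trans_lt ((ENNReal.ofReal_lt_ofReal_iff_of_nonneg hS).2 ?_)) (hinj.mono hsub)
    rw [abs_of_pos (sub_pos.2 hgt)] at hsmall hft₀
    simp only [Pi.add_apply, lt_sub_iff_add_lt, lt_min_iff]
    constructor <;> linarith [abs_le.1 hgab, abs_le.1 hgbt₀, abs_lt.1 hft₀]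

theorem stmt5 (a b c : ℝ) (hac : a < c) (hb : b ∈ Set.Ico a c)
    (f g : ℝ → ℝ)
    (hf : ContinuousOn f (Set.Ico a c))
    (hflim : Filter.Tendsto f (nhdsWithin c (Set.Iio c)) (nhds (f a)))
    (hfab : f a ≠ f b)
    (hgrc : ∀ t ∈ Set.Ico a c, ContinuousWithinAt g (Set.Ici t) t)
    (hgll : ∀ t ∈ Set.Ioc a c, ∃ L : ℝ, Filter.Tendsto g (nhdsWithin t (Set.Iio t)) (nhds L))
    (hsum : Summable (fun s : Set.Ico a c => |jumpAt g a s|))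
    (hpure : ∀ x ∈ Set.Ico a c, g x = ∑' s : Set.Icc a x, jumpAt g a s)
    (hsmall : (∑' s : Set.Ico a c, |jumpAt g a s|) < (1/2) * |f a - f b|) :
    ¬ Set.InjOn (fun t => f t + g t) (Set.Ico a c) :=
  stmt5_general a b c hb f g hf hflim hfab hgrc hgll hsum hpure hsmall
end

section
/- For two distinct starting points x ≠ y in C̃ with the above construction, the ranges of the corresponding paths X^x and X^y are disjoint: X^x(s) ≠ X^y(t) for all s, t ≥ 0. -/
/-- The real number with ternary digits `2` exactly at positions where `a` is `true`. -/
noncomputable def cantorRep (a : ℕ → Bool) : ℝ :=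
  ∑' j : ℕ, (if a j then (2:ℝ) else 0) / 3 ^ (j + 1)

/-- The path starting at `x`, jumping at time `q n` by `(1/3)^(h n + 1)`. -/
noncomputable def cantorPath (x : ℝ) (q : ℕ → ℝ) (h : ℕ → ℕ) (t : ℝ) : ℝ :=
  x + ∑' n : ℕ, Set.indicator (Set.Ici (q n)) (fun _ => ((1:ℝ)/3) ^ (h n + 1)) t

/-! The value of the path started at `x` at time `s` has the ternary digits `2` where `x` has them
and `0` or `1` elsewhere. Since `x` has infinitely many zero digits, this digit sequence is not
eventually `2`, so it is the unique ternary expansion of that value. Equal values of the two paths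
would therefore have the same digits, in particular the same positions of the digit `2`, which
forces `x = y`. -/

namespace Real

variable {b : ℕ}

theorem ofDigits_add {x y z : ℕ → Fin b} (h : ∀ i, (z i : ℕ) = x i + y i) :
    ofDigits z = ofDigits x + ofDigits y := by
  rw [ofDigits, ofDigits, ofDigits, ← summable_ofDigitsTerm.tsum_add summable_ofDigitsTerm]
  refine tsum_congr fun i => ?_
  simp only [ofDigitsTerm, h i, Nat.cast_add]
  ring

theorem ofDigits_lt_one [NeZero b] {x : ℕ → Fin (b + 1)} {m : ℕ} (hm : x m ≠ Fin.last b) :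
    ofDigits x < 1 := by
  rw [← ofDigits_const_last_eq_one b]
  refine summable_ofDigitsTerm.tsum_lt_tsum (i := m) (fun n => ?_) ?_ summable_ofDigitsTerm
  · unfold ofDigitsTerm; gcongr; exact_mod_cast Fin.le_last _
  · unfold ofDigitsTerm; gcongr; exact_mod_cast Fin.lt_last_iff_ne_last.2 hm

theorem ofDigits_eq_head_add_ofDigits_tail_div (x : ℕ → Fin b) :
    ofDigits x = (((x 0 : ℕ) : ℝ) + ofDigits (fun i => x (i + 1))) / b := by
  rw [ofDigits_eq_sum_add_ofDigits x 1]
  simp only [Finset.sum_range_one, ofDigitsTerm]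
  ring

theorem ofDigits_lt_ofDigits_of_lt_head [NeZero b] {x y : ℕ → Fin (b + 1)} (h0 : x 0 < y 0)
    {m : ℕ} (hm : x (m + 1) ≠ Fin.last b) : ofDigits x < ofDigits y := by
  have htail : ofDigits (fun i => x (i + 1)) < 1 := ofDigits_lt_one hm
  have h0' : ((x 0 : ℕ) : ℝ) + 1 ≤ (y 0 : ℕ) := by exact_mod_cast h0
  rw [ofDigits_eq_head_add_ofDigits_tail_div x, ofDigits_eq_head_add_ofDigits_tail_div y]
  gcongr ?_ / _
  linarith [ofDigits_nonneg (fun i => y (i + 1))]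

theorem ofDigits_lt_ofDigits [NeZero b] {x y : ℕ → Fin (b + 1)} {n : ℕ}
    (hlow : ∀ i < n, x i = y i) (hn : x n < y n) {m : ℕ} (hnm : n < m)
    (hm : x m ≠ Fin.last b) : ofDigits x < ofDigits y := by
  have hterm : ∀ i ∈ Finset.range n, ofDigitsTerm x i = ofDigitsTerm y i := fun i hi => by
    simp only [ofDigitsTerm, hlow i (Finset.mem_range.1 hi)]
  rw [ofDigits_eq_sum_add_ofDigits x n, ofDigits_eq_sum_add_ofDigits y n,
    Finset.sum_congr rfl hterm]
  gcongr
  refine ofDigits_lt_ofDigits_of_lt_head (x := fun i => x (i + n)) (y := fun i => y (i + n))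
    (by simpa using hn) (m := m - n - 1) ?_
  rwa [show m - n - 1 + 1 + n = m by omega]

theorem ofDigits_injOn [NeZero b] :
    Set.InjOn ofDigits {x : ℕ → Fin (b + 1) | {i | x i ≠ Fin.last b}.Infinite} := by
  intro x hx y hy hxy
  by_contra hne
  classical
  have hdiff : ∃ i, x i ≠ y i := Function.ne_iff.1 hne
  set n := Nat.find hdiff
  have hlow : ∀ i < n, x i = y i := fun i hi => not_not.1 (Nat.find_min hdiff hi)
  rcases (Nat.find_spec hdiff).lt_or_gt with hn | hn
  · obtain ⟨m, hm, hnm⟩ := Set.Infinite.exists_gt hx n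
    exact (ofDigits_lt_ofDigits hlow hn hnm hm).ne hxy
  · obtain ⟨m, hm, hnm⟩ := Set.Infinite.exists_gt hy n
    exact (ofDigits_lt_ofDigits (fun i hi => (hlow i hi).symm) hn hnm hm).ne' hxy

end Real

open Real

def cantorDigits (a : ℕ → Bool) (j : ℕ) : Fin 3 :=
  if a j then 2 else 0

open scoped Classical in
noncomputable def jumpDigits (q : ℕ → ℝ) (h : ℕ → ℕ) (s : ℝ) (j : ℕ) : Fin 3 :=
  if j ∈ h '' {n | q n ≤ s} then 1 else 0

noncomputable def pathDigits (a : ℕ → Bool) (q : ℕ → ℝ) (h : ℕ → ℕ) (s : ℝ) (j : ℕ) : Fin 3 :=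
  if a j then 2 else jumpDigits q h s j

theorem cantorRep_eq_ofDigits (a : ℕ → Bool) : cantorRep a = ofDigits (cantorDigits a) := by
  refine tsum_congr fun j => ?_
  by_cases haj : a j <;> simp [ofDigitsTerm, cantorDigits, haj, div_eq_mul_inv]

theorem tsum_indicator_eq_ofDigits_jumpDigits (q : ℕ → ℝ) {h : ℕ → ℕ} (hinj : h.Injective)
    (s : ℝ) :
    ∑' n, Set.indicator (Set.Ici (q n)) (fun _ => ((1:ℝ)/3) ^ (h n + 1)) s
      = ofDigits (jumpDigits q h s) := by
  rw [ofDigits, ← hinj.tsum_eq (f := ofDigitsTerm (jumpDigits q h s))]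
  · refine tsum_congr fun n => ?_
    by_cases hn : q n ≤ s <;> simp [ofDigitsTerm, jumpDigits, hinj.mem_set_image, hn]
  · intro j hj
    by_contra hjh
    have : j ∉ h '' {n | q n ≤ s} := fun ⟨n, _, hn⟩ => hjh ⟨n, hn⟩
    simp [ofDigitsTerm, jumpDigits, this] at hj

theorem val_pathDigits {a : ℕ → Bool} (q : ℕ → ℝ) {h : ℕ → ℕ}
    (hr : Set.range h = {j | a j = false}) (s : ℝ) (j : ℕ) :
    (pathDigits a q h s j : ℕ) = cantorDigits a j + jumpDigits q h s j := by
  by_cases haj : a j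
  · have : j ∉ h '' {n | q n ≤ s} := fun ⟨n, _, hn⟩ => by
      have : j ∈ Set.range h := ⟨n, hn⟩
      simp [hr, haj] at this
    simp [pathDigits, cantorDigits, jumpDigits, haj, this]
  · simp [pathDigits, cantorDigits, haj]

theorem cantorPath_eq_ofDigits {a : ℕ → Bool} (q : ℕ → ℝ) {h : ℕ → ℕ} (hinj : h.Injective)
    (hr : Set.range h = {j | a j = false}) (s : ℝ) :
    cantorPath (cantorRep a) q h s = ofDigits (pathDigits a q h s) := by
  rw [cantorPath, cantorRep_eq_ofDigits, tsum_indicator_eq_ofDigits_jumpDigits q hinj,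
    ofDigits_add (val_pathDigits q hr s)]

theorem pathDigits_eq_two_iff (a : ℕ → Bool) (q : ℕ → ℝ) (h : ℕ → ℕ) (s : ℝ) (j : ℕ) :
    pathDigits a q h s j = 2 ↔ a j = true := by
  unfold pathDigits jumpDigits
  split_ifs <;> simp_all

theorem infinite_pathDigits_ne_two {a : ℕ → Bool} (ha : {j | a j = false}.Infinite)
    (q : ℕ → ℝ) (h : ℕ → ℕ) (s : ℝ) : {j | pathDigits a q h s j ≠ Fin.last 2}.Infinite :=
  ha.mono fun j hj => by
    change pathDigits a q h s j ≠ 2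
    simpa [pathDigits_eq_two_iff] using hj

theorem stmt15_general (a b : ℕ → Bool)
    (ha0 : {j | a j = false}.Infinite)
    (hb0 : {j | b j = false}.Infinite)
    (hxy : cantorRep a ≠ cantorRep b)
    (q : ℕ → ℝ)
    (ha : ℕ → ℕ) (hainj : Function.Injective ha)
    (har : Set.range ha = {j | a j = false})
    (hb : ℕ → ℕ) (hbinj : Function.Injective hb)
    (hbr : Set.range hb = {j | b j = false}) :
    ∀ s t : ℝ, 0 ≤ s → 0 ≤ t →
      cantorPath (cantorRep a) q ha s ≠ cantorPath (cantorRep b) q hb t := by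
  intro s t _ _ hst
  rw [cantorPath_eq_ofDigits q hainj har, cantorPath_eq_ofDigits q hbinj hbr] at hst
  have hdigits := ofDigits_injOn (infinite_pathDigits_ne_two ha0 q ha s)
    (infinite_pathDigits_ne_two hb0 q hb t) hst
  refine hxy (congrArg cantorRep (funext fun j => Bool.eq_iff_iff.2 ?_))
  rw [← pathDigits_eq_two_iff a q ha s, ← pathDigits_eq_two_iff b q hb t, hdigits]

theorem stmt15 (a b : ℕ → Bool)
    (ha0 : {j | a j = false}.Infinite) (ha2 : {j | a j = true}.Infinite)
    (hb0 : {j | b j = false}.Infinite) (hb2 : {j | b j = true}.Infinite)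
    (hxy : cantorRep a ≠ cantorRep b)
    (q : ℕ → ℝ) (hqinj : Function.Injective q)
    (hqr : Set.range q = {r : ℝ | 0 < r ∧ ∃ m : ℚ, (m : ℝ) = r})
    (ha : ℕ → ℕ) (hainj : Function.Injective ha)
    (har : Set.range ha = {j | a j = false})
    (hb : ℕ → ℕ) (hbinj : Function.Injective hb)
    (hbr : Set.range hb = {j | b j = false}) :
    ∀ s t : ℝ, 0 ≤ s → 0 ≤ t →
      cantorPath (cantorRep a) q ha s ≠ cantorPath (cantorRep b) q hb t :=
  stmt15_general a b ha0 hb0 hxy q ha hainj har hb hbinj hbr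
end

section
/- Let f : [0,∞) → ℝ be continuous and suppose there exists t₀ ∈ [0,∞] such that f is strictly monotone (increasing or decreasing) on [0,t₀) and constant on [t₀,∞). Then f satisfies the time-homogeneity property: f(s) = f(t) implies f(s+h) = f(t+h) for all h ≥ 0. Conversely, if f : [0,∞) → ℝ is continuous and satisfies the time-homogeneity property, then such a t₀ exists. -/
/-!
Trajectories of a continuous time-homogeneous path cannot cross: by the intermediate value
theorem two shifted copies `f (a + ·)` and `f (b + ·)` that swap order must meet, and from then on
they agree. If `f s = f t` with `s < t`, then `f` is `(t - s)`-periodic on `[s, ∞)`; comparing the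
trajectory started at a minimum point `l` of `f` on `[s, t]` with those started at other points of
a period shows that `f` never rises above `f l` after `l`, and periodicity spreads this to all of
`[s, ∞)`. Together with the symmetric argument for `-f`, `f` is constant from its first repeated
value on, and injective (hence strictly monotone) before it.
-/

/-- Time-homogeneity property for a deterministic real-valued path. -/
def TimeHom (f : ℝ → ℝ) : Prop :=
  ∀ s t : ℝ, 0 ≤ s → 0 ≤ t → f s = f t → ∀ h : ℝ, 0 ≤ h → f (s + h) = f (t + h)

open Set

section Monotonicity

variable {α β : Type*} [LinearOrder α] [TopologicalSpace α] [OrderTopology α] [DenselyOrdered α]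
  [LinearOrder β] [TopologicalSpace β] [OrderClosedTopology β] {f : α → β} {a b : α}

theorem StrictMonoOn.Icc_of_Ico (hm : StrictMonoOn f (Ico a b))
    (hc : ContinuousWithinAt f (Ico a b) b) : StrictMonoOn f (Icc a b) := by
  intro x hx y hy hxy
  rcases hy.2.lt_or_eq with hyb | rfl
  · exact hm ⟨hx.1, hxy.trans hyb⟩ ⟨hy.1, hyb⟩ hxy
  obtain ⟨z, hxz, hzy⟩ := exists_between hxy
  have hz : z ∈ Ico a y := ⟨hx.1.trans hxz.le, hzy⟩
  have hIoo : Ioo z y ⊆ Ico a y := fun w hw => ⟨hz.1.trans hw.1.le, hw.2⟩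
  have hy_mem : y ∈ closure (Ioo z y) := by
    rw [closure_Ioo hzy.ne]
    exact right_mem_Icc.2 hzy.le
  refine (hm ⟨hx.1, hxy⟩ hz hxz).trans_le ?_
  exact ContinuousWithinAt.closure_le hy_mem continuousWithinAt_const (hc.mono hIoo)
    fun w hw => (hm hz (hIoo hw) hw.1).le

theorem StrictAntiOn.Icc_of_Ico (hm : StrictAntiOn f (Ico a b))
    (hc : ContinuousWithinAt f (Ico a b) b) : StrictAntiOn f (Icc a b) :=
  StrictMonoOn.Icc_of_Ico (β := βᵒᵈ) hm hc

end Monotonicity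

theorem ContinuousOn.strictMonoOn_or_strictAntiOn_of_injOn {α δ : Type*}
    [ConditionallyCompleteLinearOrder α] [TopologicalSpace α] [OrderTopology α]
    [DenselyOrdered α] [LinearOrder δ] [TopologicalSpace δ] [OrderClosedTopology δ]
    {f : α → δ} {s : Set α} (hs : s.OrdConnected) (hc : ContinuousOn f s) (hi : InjOn f s) :
    StrictMonoOn f s ∨ StrictAntiOn f s := by
  rcases s.eq_empty_or_nonempty with rfl | ⟨x, hx⟩
  · exact .inl fun _ hx => hx.elim
  have : Inhabited s := ⟨⟨x, hx⟩⟩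
  exact (Continuous.strictMono_of_inj hc.domRestrict hi.injective).imp
    strictMonoOn_iff_strictMono.mpr strictAntiOn_iff_strictAnti.mpr

section Periodic

variable {f : ℝ → ℝ} {s p : ℝ}

theorem apply_add_nat_mul_of_periodicOn (hp : 0 ≤ p) (hper : ∀ x, s ≤ x → f (x + p) = f x)
    (n : ℕ) {x : ℝ} (hx : s ≤ x) : f (x + n * p) = f x := by
  induction n with
  | zero => simp
  | succ n ih =>
    have hxn : s ≤ x + n * p := le_add_of_le_of_nonneg hx (by positivity)
    rw [Nat.cast_succ, add_one_mul, ← add_assoc, hper _ hxn, ih]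

theorem exists_mem_Ico_apply_eq_of_periodicOn (hp : 0 < p)
    (hper : ∀ x, s ≤ x → f (x + p) = f x) {y : ℝ} (hy : s ≤ y) :
    ∃ x ∈ Ico s (s + p), f x = f y := by
  set n := ⌊(y - s) / p⌋₊
  have hn : n * p ≤ y - s := (le_div_iff₀ hp).1 (Nat.floor_le (div_nonneg (sub_nonneg.2 hy) hp.le))
  have hn' : y - s < (n + 1) * p := (div_lt_iff₀ hp).1 (Nat.lt_floor_add_one _)
  refine ⟨y - n * p, ⟨by linarith, by linarith⟩, ?_⟩
  rw [← apply_add_nat_mul_of_periodicOn hp.le hper n (by linarith : s ≤ y - n * p), sub_add_cancel]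

end Periodic

namespace TimeHom

variable {f : ℝ → ℝ}

theorem neg (H : TimeHom f) : TimeHom (-f) := fun s t hs ht he h hh => by
  simp only [Pi.neg_apply, neg_inj] at he ⊢
  exact H s t hs ht he h hh

theorem periodicOn (H : TimeHom f) {s t : ℝ} (hs : 0 ≤ s) (ht : 0 ≤ t) (he : f s = f t) {x : ℝ}
    (hx : s ≤ x) : f (x + (t - s)) = f x := by
  have := H s t hs ht he (x - s) (sub_nonneg.2 hx)
  rwa [add_sub_cancel, show t + (x - s) = x + (t - s) by ring, eq_comm] at this

theorem apply_add_le_apply_add (hf : ContinuousOn f (Ici 0)) (H : TimeHom f) {a b h : ℝ}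
    (ha : 0 ≤ a) (hb : 0 ≤ b) (hh : 0 ≤ h) (hab : f a ≤ f b) : f (a + h) ≤ f (b + h) := by
  by_contra! hlt
  have hshift {c : ℝ} (hc : 0 ≤ c) : ContinuousOn (fun τ => f (c + τ)) (Icc 0 h) :=
    hf.comp (continuousOn_const.add continuousOn_id) fun τ hτ => add_nonneg hc hτ.1
  obtain ⟨τ, hτ, hcross⟩ : ∃ τ ∈ Icc 0 h, f (a + τ) - f (b + τ) = 0 :=
    intermediate_value_Icc hh ((hshift ha).sub (hshift hb))
      ⟨by simpa using hab, by simpa using hlt.le⟩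
  have := H (a + τ) (b + τ) (by linarith [hτ.1]) (by linarith [hτ.1]) (sub_eq_zero.1 hcross)
    (h - τ) (sub_nonneg.2 hτ.2)
  rw [add_add_sub_cancel, add_add_sub_cancel] at this
  exact hlt.ne' this

theorem apply_le_of_apply_eq (hf : ContinuousOn f (Ici 0)) (H : TimeHom f) {s t : ℝ}
    (hs : 0 ≤ s) (hst : s < t) (he : f s = f t) {y : ℝ} (hy : s ≤ y) : f y ≤ f s := by
  have hp : 0 < t - s := sub_pos.2 hst
  have hper : ∀ x, s ≤ x → f (x + (t - s)) = f x := fun x hx => H.periodicOn hs (by linarith) he hx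
  obtain ⟨l, hl, hmin⟩ := isCompact_Icc.exists_isMinOn (nonempty_Icc.2 hst.le)
    (hf.mono fun x hx => hs.trans hx.1)
  have hl_le : ∀ x, s ≤ x → f l ≤ f x := fun x hx => by
    obtain ⟨x', hx', hfx'⟩ := exists_mem_Ico_apply_eq_of_periodicOn hp hper hx
    exact hfx' ▸ hmin ⟨hx'.1, by linarith [hx'.2]⟩
  -- the trajectory from `l + n * (t - s) - h` starts at or above `f l` and is at `f l` at time `h`
  have hdecr : ∀ h, 0 ≤ h → f (l + h) ≤ f l := fun h hh => by
    obtain ⟨n, hn⟩ := exists_nat_ge (h / (t - s))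
    have hnh : h ≤ n * (t - s) := (div_le_iff₀ hp).1 hn
    calc f (l + h) ≤ f (l + n * (t - s) - h + h) :=
          H.apply_add_le_apply_add hf (hs.trans hl.1) (by linarith [hl.1]) hh
            (hl_le _ (by linarith [hl.1]))
      _ = f l := by rw [sub_add_cancel, apply_add_nat_mul_of_periodicOn hp.le hper n hl.1]
  calc f y = f (l + (y + (t - s) - l)) := by rw [add_sub_cancel, hper y hy]
    _ ≤ f l := hdecr _ (by linarith [hl.2])
    _ ≤ f s := hmin (left_mem_Icc.2 hst.le)

theorem apply_eq_of_apply_eq (hf : ContinuousOn f (Ici 0)) (H : TimeHom f) {s t : ℝ}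
    (hs : 0 ≤ s) (hst : s < t) (he : f s = f t) {y : ℝ} (hy : s ≤ y) : f y = f s :=
  le_antisymm (H.apply_le_of_apply_eq hf hs hst he hy)
    (by simpa using H.neg.apply_le_of_apply_eq hf.neg hs hst (by simp [he]) hy)

theorem exists_injOn_Ico_and_const (hf : ContinuousOn f (Ici 0)) (H : TimeHom f)
    (hni : ¬ InjOn f (Ici 0)) :
    ∃ t₀, 0 ≤ t₀ ∧ InjOn f (Ico 0 t₀) ∧ ∀ t, t₀ ≤ t → f t = f t₀ := by
  obtain ⟨a, b, ha, hab, he⟩ : ∃ a b, 0 ≤ a ∧ a < b ∧ f a = f b := by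
    simp only [InjOn, not_forall] at hni
    obtain ⟨x, hx, y, hy, hxy, hne⟩ := hni
    rcases lt_or_gt_of_ne hne with h | h
    exacts [⟨x, y, hx, h, hxy⟩, ⟨y, x, hy, h, hxy.symm⟩]
  -- `t₀` is the first time `f` takes the value `f a`
  set Z := Ici 0 ∩ f ⁻¹' {f a}
  have hbdd : BddBelow Z := ⟨0, fun x hx => hx.1⟩
  have haZ : a ∈ Z := ⟨ha, rfl⟩
  have ht₀ : sInf Z ∈ Z :=
    (hf.preimage_isClosed_of_isClosed isClosed_Ici isClosed_singleton).csInf_mem ⟨a, haZ⟩ hbdd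
  have hta : sInf Z ≤ a := csInf_le hbdd haZ
  refine ⟨sInf Z, ht₀.1, fun x hx y hy hxy => ?_, fun t ht =>
    H.apply_eq_of_apply_eq hf ht₀.1 (hta.trans_lt hab) (ht₀.2.trans he) ht⟩
  by_contra hne
  wlog hlt : x < y generalizing x y
  · exact this y hy x hx hxy.symm (Ne.symm hne) ((not_lt.1 hlt).lt_of_ne (Ne.symm hne))
  have hxZ : x ∈ Z := ⟨hx.1, (H.apply_eq_of_apply_eq hf hx.1 hlt hxy (hx.2.le.trans hta)).symm⟩
  exact (csInf_le hbdd hxZ).not_gt hx.2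

end TimeHom

theorem timeHom_of_injOn_Ici {f : ℝ → ℝ} (hinj : InjOn f (Ici 0)) : TimeHom f :=
  fun s t hs ht he _ _ => by rw [hinj hs ht he]

theorem timeHom_of_injOn_Icc {f : ℝ → ℝ} {t₀ : ℝ} (hinj : InjOn f (Icc 0 t₀))
    (hconst : ∀ t, t₀ ≤ t → f t = f t₀) : TimeHom f := by
  intro s t hs ht he h hh
  rcases lt_or_ge s t₀ with hs₀ | hs₀ <;> rcases lt_or_ge t t₀ with ht₀ | ht₀
  · rw [hinj ⟨hs, hs₀.le⟩ ⟨ht, ht₀.le⟩ he]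
  · exact absurd (hinj ⟨hs, hs₀.le⟩ ⟨hs.trans hs₀.le, le_rfl⟩ (he.trans (hconst t ht₀))) hs₀.ne
  · exact absurd (hinj ⟨ht, ht₀.le⟩ ⟨ht.trans ht₀.le, le_rfl⟩ (he.symm.trans (hconst s hs₀)))
      ht₀.ne
  · rw [hconst (s + h) (by linarith), hconst (t + h) (by linarith)]

theorem stmt18 (f : ℝ → ℝ) (hf : ContinuousOn f (Set.Ici 0)) :
    TimeHom f ↔
      ((∃ t₀ : ℝ, 0 ≤ t₀ ∧
          (StrictMonoOn f (Set.Ico 0 t₀) ∨ StrictAntiOn f (Set.Ico 0 t₀)) ∧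
          (∀ t : ℝ, t₀ ≤ t → f t = f t₀)) ∨
        (StrictMonoOn f (Set.Ici 0) ∨ StrictAntiOn f (Set.Ici 0))) := by
  constructor
  · intro H
    by_cases hinj : InjOn f (Ici 0)
    · exact Or.inr (hf.strictMonoOn_or_strictAntiOn_of_injOn ordConnected_Ici hinj)
    obtain ⟨t₀, ht₀, hinj, hconst⟩ := H.exists_injOn_Ico_and_const hf hinj
    exact Or.inl ⟨t₀, ht₀, (hf.mono Ico_subset_Ici_self).strictMonoOn_or_strictAntiOn_of_injOn
      ordConnected_Ico hinj, hconst⟩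
  · rintro (⟨t₀, ht₀, hmono, hconst⟩ | hmono)
    · have hc : ContinuousWithinAt f (Ico 0 t₀) t₀ := (hf t₀ ht₀).mono Ico_subset_Ici_self
      refine timeHom_of_injOn_Icc ?_ hconst
      rcases hmono with h | h
      exacts [(h.Icc_of_Ico hc).injOn, (h.Icc_of_Ico hc).injOn]
    · exact timeHom_of_injOn_Ici (hmono.elim StrictMonoOn.injOn StrictAntiOn.injOn)
end

section
/- Let f : [0,∞) → ℝ be continuous and satisfy the time-homogeneity property, and suppose f is not injective. Then f is finally constant; in particular a continuous function satisfying the time-homogeneity property cannot be jump-periodic with strictly positive period. -/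
/-- The set of times `t` at which `f` repeats an earlier value. -/
def repAfter (f : ℝ → ℝ) : Set ℝ :=
  {t | 0 ≤ t ∧ ∃ s, 0 ≤ s ∧ s < t ∧ f s = f t}

/-- The set of times `s` whose value is taken again later. -/
def repBefore (f : ℝ → ℝ) : Set ℝ :=
  {s | 0 ≤ s ∧ ∃ t, s < t ∧ f s = f t}

/-- `f` is finally constant: injective on `[0,t₀)` and constant on `[t₀,∞)`. -/
def FinallyConstant (f : ℝ → ℝ) : Prop :=
  ∃ t₀ : ℝ, 0 ≤ t₀ ∧ Set.InjOn f (Set.Ico 0 t₀) ∧ ∀ t, t₀ ≤ t → f t = f t₀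

/-- `f` is jump-periodic with strictly positive period `t₁ - t₀`. -/
def JumpPeriodic (f : ℝ → ℝ) : Prop :=
  (repAfter f).Nonempty ∧ sInf (repBefore f) < sInf (repAfter f) ∧
  ∀ u, sInf (repAfter f) ≤ u →
    f u = f (u - (sInf (repAfter f) - sInf (repBefore f)))

/-!
If `f s = f t` with `s < t`, time-homogeneity makes `f` periodic with period `t - s` on `[s, ∞)`,
so by continuity `f` attains its minimum and maximum over `[s, ∞)`. For every `d > 0` the function
`x ↦ f (x + d) - f x` is then `≥ 0` at the minimiser and `≤ 0` at the maximiser, so it vanishes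
somewhere; time-homogeneity spreads this repetition to all later times, which forces `f` to be
constant on `[s, ∞)`. Hence the set of times whose value is repeated later is a closed half-line
`[t₀, ∞)`, the set of times repeating an earlier value is `(t₀, ∞)`, and the would-be period
`t₁ - t₀` of a jump-periodic function is `0`.
-/

open Set

theorem TimeHom.map_add_period {f : ℝ → ℝ} (hTH : TimeHom f) {s t : ℝ} (hs : 0 ≤ s)
    (hst : s < t) (hfeq : f s = f t) (u : ℝ) (hu : s ≤ u) : f (u + (t - s)) = f u := by
  have h := hTH s t hs (hs.trans hst.le) hfeq (u - s) (by linarith)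
  rw [add_sub_cancel, show t + (u - s) = u + (t - s) by ring] at h
  exact h.symm

section PeriodicFrom

variable {f : ℝ → ℝ} {s p : ℝ}

theorem map_add_nat_mul_of_periodic_from (hper : ∀ u, s ≤ u → f (u + p) = f u) (hp : 0 ≤ p)
    (n : ℕ) (u : ℝ) (hu : s ≤ u) : f (u + n * p) = f u := by
  induction n with
  | zero => simp
  | succ k ih =>
    have hk : 0 ≤ (k : ℝ) * p := mul_nonneg k.cast_nonneg hp
    rw [Nat.cast_succ, add_one_mul, ← add_assoc, hper _ (by linarith), ih]

theorem exists_mem_Icc_map_eq_of_periodic_from (hper : ∀ u, s ≤ u → f (u + p) = f u)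
    (hp : 0 < p) (y : ℝ) (hy : s ≤ y) : ∃ z ∈ Icc s (s + p), f z = f y := by
  set n := ⌊(y - s) / p⌋₊
  have hlow : (n : ℝ) * p ≤ y - s :=
    (le_div_iff₀ hp).1 (Nat.floor_le (div_nonneg (by linarith) hp.le))
  have hup : y - s < (n + 1) * p := (div_lt_iff₀ hp).1 (Nat.lt_floor_add_one _)
  refine ⟨y - n * p, ⟨by linarith, by linarith⟩, ?_⟩
  have h := map_add_nat_mul_of_periodic_from hper hp.le n (y - n * p) (by linarith)
  rwa [sub_add_cancel, eq_comm] at h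

theorem exists_isMinOn_isMaxOn_Ici_of_periodic_from (hper : ∀ u, s ≤ u → f (u + p) = f u)
    (hp : 0 < p) (hf : ContinuousOn f (Icc s (s + p))) :
    ∃ xm ∈ Icc s (s + p), ∃ xM ∈ Icc s (s + p), IsMinOn f (Ici s) xm ∧ IsMaxOn f (Ici s) xM := by
  have hne : (Icc s (s + p)).Nonempty := nonempty_Icc.2 (by linarith)
  obtain ⟨xm, hxm, hmin⟩ := isCompact_Icc.exists_isMinOn hne hf
  obtain ⟨xM, hxM, hmax⟩ := isCompact_Icc.exists_isMaxOn hne hf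
  refine ⟨xm, hxm, xM, hxM, fun y hy => ?_, fun y hy => ?_⟩ <;>
  · obtain ⟨z, hz, hzy⟩ := exists_mem_Icc_map_eq_of_periodic_from hper hp y hy
    rw [mem_ofPred_eq, ← hzy]
    first | exact hmin hz | exact hmax hz

end PeriodicFrom

theorem exists_map_add_eq_of_isMinOn_of_isMaxOn {f : ℝ → ℝ} {s xm xM : ℝ}
    (hf : ContinuousOn f (Ici s)) (hxm : s ≤ xm) (hxM : s ≤ xM)
    (hmin : IsMinOn f (Ici s) xm) (hmax : IsMaxOn f (Ici s) xM) {d : ℝ} (hd : 0 ≤ d) :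
    ∃ x ∈ uIcc xm xM, f (x + d) = f x := by
  have hsub : uIcc xm xM ⊆ Ici s := fun x hx => le_trans (le_min hxm hxM) hx.1
  have hg : ContinuousOn (fun x => f (x + d) - f x) (uIcc xm xM) :=
    ((hf.comp (continuousOn_id.add continuousOn_const) fun x (hx : s ≤ x) =>
      hx.trans (le_add_of_nonneg_right hd)).sub hf).mono hsub
  have hzero : (0 : ℝ) ∈ uIcc (f (xm + d) - f xm) (f (xM + d) - f xM) :=
    mem_uIcc.2 <| Or.inr
      ⟨sub_nonpos.2 (hmax (show s ≤ xM + d by linarith)),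
        sub_nonneg.2 (hmin (show s ≤ xm + d by linarith))⟩
  obtain ⟨x, hx, hgx⟩ := intermediate_value_uIcc hg hzero
  exact ⟨x, hx, sub_eq_zero.1 hgx⟩

theorem TimeHom.map_eq_of_map_eq {f : ℝ → ℝ} (hf : ContinuousOn f (Ici 0)) (hTH : TimeHom f)
    {s t : ℝ} (hs : 0 ≤ s) (hst : s < t) (hfeq : f s = f t) (u : ℝ) (hu : s ≤ u) :
    f u = f s := by
  set p := t - s
  have hp : 0 < p := sub_pos.2 hst
  have hper := hTH.map_add_period hs hst hfeq
  have hfs : ContinuousOn f (Ici s) := hf.mono (Ici_subset_Ici.2 hs)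
  obtain ⟨xm, hxm, xM, hxM, hmin, hmax⟩ :=
    exists_isMinOn_isMaxOn_Ici_of_periodic_from hper hp (hfs.mono Icc_subset_Ici_self)
  obtain ⟨x, hx, hfx⟩ :=
    exists_map_add_eq_of_isMinOn_of_isMaxOn hfs hxm.1 hxM.1 hmin hmax (sub_nonneg.2 hu)
  have hxI : x ∈ Icc s (s + p) := uIcc_subset_Icc hxm hxM hx
  -- the repetition at `x` with lag `u - s` is carried forward to time `s + p`
  have hshift := hTH x (x + (u - s)) (hs.trans hxI.1) (by linarith [hxI.1]) hfx.symm
    (s + p - x) (by linarith [hxI.2])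
  rw [show x + (s + p - x) = s + p by ring, show x + (u - s) + (s + p - x) = u + p by ring,
    hper s le_rfl, hper u hu] at hshift
  exact hshift.symm

theorem repBefore_eq_Ici_sInf {f : ℝ → ℝ} (hf : ContinuousOn f (Ici 0))
    (hconst : ∀ u ∈ repBefore f, ∀ t, u ≤ t → f t = f u) (hne : (repBefore f).Nonempty) :
    repBefore f = Ici (sInf (repBefore f)) := by
  set t₀ := sInf (repBefore f)
  have hbdd : BddBelow (repBefore f) := ⟨0, fun u hu => hu.1⟩
  have ht₀ : 0 ≤ t₀ := le_csInf hne fun u hu => hu.1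
  have hupper : ∀ u ∈ repBefore f, ∀ v, u ≤ v → v ∈ repBefore f := fun u hu v huv =>
    ⟨hu.1.trans huv, v + 1, lt_add_one v, by
      rw [hconst u hu v huv, hconst u hu (v + 1) (by linarith)]⟩
  have hgt : ∀ t, t₀ < t → t ∈ repBefore f := fun t ht =>
    let ⟨u, hu, hut⟩ := exists_lt_of_csInf_lt hne ht
    hupper u hu t hut.le
  have heqOn : EqOn f (fun _ => f (t₀ + 1)) (Ioi t₀) := fun t ht => by
    rcases le_total t (t₀ + 1) with h | h
    · exact (hconst t (hgt t ht) _ h).symm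
    · exact hconst _ (hgt _ (lt_add_one t₀)) t h
  have hft₀ : f t₀ = f (t₀ + 1) :=
    heqOn.of_subset_closure (hf.mono (Ici_subset_Ici.2 ht₀)) continuousOn_const Ioi_subset_Ici_self
      (closure_Ioi t₀).ge self_mem_Ici
  refine Subset.antisymm (fun u hu => csInf_le hbdd hu) fun t ht => ?_
  rcases (mem_Ici.1 ht).eq_or_lt with rfl | h
  · exact ⟨ht₀, t₀ + 1, lt_add_one _, hft₀⟩
  · exact hgt t h

theorem nonempty_repBefore_of_not_injOn {f : ℝ → ℝ} (hni : ¬ InjOn f (Ici 0)) :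
    (repBefore f).Nonempty := by
  simp only [InjOn, not_forall] at hni
  obtain ⟨a, ha, b, hb, hab, hne⟩ := hni
  rcases lt_or_gt_of_ne hne with h | h
  · exact ⟨a, ha, b, h, hab⟩
  · exact ⟨b, hb, a, h, hab.symm⟩

section RepBeforeEqIci

variable {f : ℝ → ℝ} {t₀ : ℝ}

theorem le_of_map_eq_of_repBefore_eq_Ici (hR : repBefore f = Ici t₀) {u v : ℝ} (hu : 0 ≤ u) (huv : u < v)
    (hfeq : f u = f v) : t₀ ≤ u :=
  mem_Ici.1 (hR ▸ ⟨hu, v, huv, hfeq⟩ : u ∈ Ici t₀)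

variable (hconst : ∀ u ∈ repBefore f, ∀ t, u ≤ t → f t = f u) (hR : repBefore f = Ici t₀)
include hconst hR

theorem finallyConstant_of_repBefore_eq_Ici : FinallyConstant f := by
  have ht₀ : t₀ ∈ repBefore f := hR ▸ self_mem_Ici
  refine ⟨t₀, ht₀.1, fun x hx y hy hxy => ?_, hconst t₀ ht₀⟩
  by_contra h
  rcases lt_or_gt_of_ne h with h | h
  · exact (le_of_map_eq_of_repBefore_eq_Ici hR hx.1 h hxy).not_gt hx.2
  · exact (le_of_map_eq_of_repBefore_eq_Ici hR hy.1 h hxy.symm).not_gt hy.2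

theorem repAfter_eq_Ioi_of_repBefore_eq_Ici : repAfter f = Ioi t₀ := by
  have ht₀ : t₀ ∈ repBefore f := hR ▸ self_mem_Ici
  ext u
  refine ⟨fun ⟨_, v, hv, hvu, hfeq⟩ =>
    (le_of_map_eq_of_repBefore_eq_Ici hR hv hvu hfeq).trans_lt hvu, fun h => ?_⟩
  exact ⟨ht₀.1.trans h.le, t₀, ht₀.1, h, (hconst t₀ ht₀ u h.le).symm⟩

theorem not_jumpPeriodic_of_repBefore_eq_Ici : ¬ JumpPeriodic f := fun ⟨_, hlt, _⟩ => by
  rw [hR, repAfter_eq_Ioi_of_repBefore_eq_Ici hconst hR, csInf_Ici, csInf_Ioi] at hlt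
  exact lt_irrefl _ hlt

end RepBeforeEqIci

theorem stmt19 (f : ℝ → ℝ) (hf : ContinuousOn f (Set.Ici 0))
    (hTH : TimeHom f) (hni : ¬ Set.InjOn f (Set.Ici 0)) :
    FinallyConstant f ∧ ¬ JumpPeriodic f := by
  have hconst : ∀ u ∈ repBefore f, ∀ t, u ≤ t → f t = f u := fun u ⟨hu, _, huv, hfeq⟩ =>
    hTH.map_eq_of_map_eq hf hu huv hfeq
  have hR := repBefore_eq_Ici_sInf hf hconst (nonempty_repBefore_of_not_injOn hni)
  exact ⟨finallyConstant_of_repBefore_eq_Ici hconst hR,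
    not_jumpPeriodic_of_repBefore_eq_Ici hconst hR⟩
end
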